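/- Let (C, Cof, W, Fib) be a bicomplete orthogonal model category, and T = (T, η, μ) a monad on C whose underlying functor preserves all small colimits, trivial cofibrations (T(Cof ∩ W) ⊆ Cof ∩ W) and bifibrant morphisms (T(Fib ∩ Cof) ⊆ Fib ∩ Cof). Then: (i) the preimages Cof^T = (V^T)^{-1}(Cof), W^T = (V^T)^{-1}(W), Fib^T = (V^T)^{-1}(Fib) under the forgetful functor form an orthogonal model structure on the Eilenberg–Moore category C^T; (ii) V^T preserves and reflects Cof-local objects: a T-algebra (A, h) is Cof^T-local if and only if A is Cof-local. In particular, F^T ⊣ V^T is a Quillen adjunction. -/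

import Mathlib

/-!
Every cofibration factors as a trivial cofibration followed by a bifibrant morphism, so `T`
preserves cofibrations as well as trivial cofibrations. Hence, for either factorization system
`(L, R)` of the model structure, `T` maps `L` into `L`. Given an algebra map `f`, factor its
underlying map as `e ≫ m` with `e ∈ L`, `m ∈ R`: the unique filler of the square formed by
`T e` and `m` is an algebra structure on the middle object, the algebra laws being forced by
uniqueness of fillers against `e` and `T (T e)`. The same uniqueness (against `T f`) makes the
filler of a square of algebra maps an algebra map, so `(L, R)` lifts to algebras.

For locality, `Hom(B, V X) ≃ Hom(F B, X)` turns `m ≫ -` into `F m ≫ -`, and `F m` is a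
cofibration of algebras; conversely a map out of an algebra obtained from locality of `X.A` is an
algebra map because precomposition with the cofibration `T m` is injective.
-/

open CategoryTheory CategoryTheory.Limits

universe v u v₂ u₂

namespace DFS

variable {C : Type u} [Category.{v} C]

/-- `f` is (left) orthogonal to `g`: every commutative square from `f` to `g`
admits a unique diagonal filler. -/
def Orth {A B X Y : C} (f : A ⟶ B) (g : X ⟶ Y) : Prop :=
  ∀ (u : A ⟶ X) (v : B ⟶ Y), u ≫ g = f ≫ v → ∃! h : B ⟶ X, f ≫ h = u ∧ h ≫ g = v

/-- Mutual orthogonality of two classes of morphisms. -/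
def ClassOrth (L R : MorphismProperty C) : Prop :=
  ∀ ⦃A B X Y : C⦄ (f : A ⟶ B) (g : X ⟶ Y), L f → R g → Orth f g

/-- The class `R·L` of composites `e ≫ m` with `e ∈ L` and `m ∈ R`. -/
def Comp (R L : MorphismProperty C) : MorphismProperty C :=
  fun X Y f => ∃ (Z : C) (e : X ⟶ Z) (m : Z ⟶ Y), L e ∧ R m ∧ e ≫ m = f

/-- An object `X` is `L`-local if precomposition with every member of `L` is a
bijection of hom-sets into `X`. -/
def IsLocal (L : MorphismProperty C) (X : C) : Prop :=
  ∀ ⦃A B : C⦄ (m : A ⟶ B), L m → Function.Bijective (fun g : B ⟶ X => m ≫ g)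

/-- An object `X` is `L`-separating if precomposition with every member of `L` is an
injection of hom-sets into `X`. -/
def IsSeparating (L : MorphismProperty C) (X : C) : Prop :=
  ∀ ⦃A B : C⦄ (m : A ⟶ B), L m → Function.Injective (fun g : B ⟶ X => m ≫ g)

/-- A double (orthogonal) factorization system. -/
structure IsDFS (E J M : MorphismProperty C) : Prop where
  postcomp_iso_E : ∀ ⦃A B B' : C⦄ (e : A ⟶ B) (i : B ⟶ B'), IsIso i → E e → E (e ≫ i)
  comp_iso_J : ∀ ⦃A' A B B' : C⦄ (i : A' ⟶ A) (j : A ⟶ B) (i' : B ⟶ B'),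
      IsIso i → IsIso i' → J j → J (i ≫ j ≫ i')
  precomp_iso_M : ∀ ⦃A' A B : C⦄ (i : A' ⟶ A) (m : A ⟶ B), IsIso i → M m → M (i ≫ m)
  fac : ∀ ⦃X Y : C⦄ (f : X ⟶ Y), ∃ (A B : C) (e : X ⟶ A) (j : A ⟶ B) (m : B ⟶ Y),
      E e ∧ J j ∧ M m ∧ e ≫ j ≫ m = f
  lift : ∀ ⦃A B B'' D D' F' : C⦄ (e : A ⟶ B) (j : B ⟶ B'') (j' : D ⟶ D') (m : D' ⟶ F')
      (u : A ⟶ D) (v : B'' ⟶ F'), E e → J j → J j' → M m →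
      e ≫ j ≫ v = u ≫ j' ≫ m →
      ∃! st : (B ⟶ D) × (B'' ⟶ D'),
        e ≫ st.1 = u ∧ st.1 ≫ j' = j ≫ st.2 ∧ st.2 ≫ m = v

/-- An (orthogonal) factorization system. -/
structure IsFS (L R : MorphismProperty C) : Prop where
  fac : ∀ ⦃X Y : C⦄ (f : X ⟶ Y), ∃ (Z : C) (e : X ⟶ Z) (m : Z ⟶ Y), L e ∧ R m ∧ e ≫ m = f
  left_iff : ∀ ⦃A B : C⦄ (f : A ⟶ B), L f ↔ ∀ ⦃X Y : C⦄ (g : X ⟶ Y), R g → Orth f g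
  right_iff : ∀ ⦃X Y : C⦄ (g : X ⟶ Y), R g ↔ ∀ ⦃A B : C⦄ (f : A ⟶ B), L f → Orth f g

/-- Stability of a class of morphisms under pullback. -/
def StableUnderPB (P : MorphismProperty C) : Prop :=
  ∀ ⦃A B A' B' : C⦄ (f : A ⟶ B) (g : B' ⟶ B) (f' : A' ⟶ B') (h : A' ⟶ A),
    IsPullback h f' f g → P f → P f'

/-- A left Quillen functor between categories equipped with dfs's: it maps
trivial cofibrations to trivial cofibrations and cofibrations to cofibrations. -/
def LeftQuillen {D : Type u₂} [Category.{v₂} D]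
    (EC JC : MorphismProperty C) (ED JD : MorphismProperty D) (F : C ⥤ D) : Prop :=
  (∀ ⦃A B : C⦄ (f : A ⟶ B), EC f → ED (F.map f)) ∧
  (∀ ⦃A B : C⦄ (f : A ⟶ B), Comp JC EC f → Comp JD ED (F.map f))

end DFS

namespace DFS

variable {C : Type u} [Category.{v} C]

/-- Intersection of two classes of morphisms. -/
def Inter (P Q : MorphismProperty C) : MorphismProperty C := fun _ _ f => P f ∧ Q f

/-- The 2-out-of-3 property for a class of morphisms. -/
def TwoOutOfThree (W : MorphismProperty C) : Prop :=
  (∀ ⦃X Y Z : C⦄ (f : X ⟶ Y) (g : Y ⟶ Z), W f → W g → W (f ≫ g)) ∧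
  (∀ ⦃X Y Z : C⦄ (f : X ⟶ Y) (g : Y ⟶ Z), W f → W (f ≫ g) → W g) ∧
  (∀ ⦃X Y Z : C⦄ (f : X ⟶ Y) (g : Y ⟶ Z), W g → W (f ≫ g) → W f)

/-- An orthogonal model structure: `W` satisfies 2-out-of-3 and both
`(Cof ∩ W, Fib)` and `(Cof, W ∩ Fib)` are orthogonal factorization systems. -/
structure IsOrthModel (Cof W Fib : MorphismProperty C) : Prop where
  two_of_three : TwoOutOfThree W
  fs₁ : IsFS (Inter Cof W) Fib
  fs₂ : IsFS Cof (Inter W Fib)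

/-- The preimage of a class of morphisms under the forgetful functor from
Eilenberg–Moore algebras. -/
def algPre (T : Monad C) (P : MorphismProperty C) : MorphismProperty T.Algebra :=
  fun _ _ f => P f.f

end DFS

namespace DFS

variable {C : Type u} [Category.{v} C]

namespace Orth

variable {A B B' X X' Y : C}

lemma ext {f : A ⟶ B} {g : X ⟶ Y} (h : Orth f g) {d₁ d₂ : B ⟶ X}
    (hf : f ≫ d₁ = f ≫ d₂) (hg : d₁ ≫ g = d₂ ≫ g) : d₁ = d₂ := by
  obtain ⟨d, -, hd⟩ := h (f ≫ d₁) (d₁ ≫ g) (Category.assoc _ _ _)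
  exact (hd d₁ ⟨rfl, rfl⟩).trans (hd d₂ ⟨hf.symm, hg.symm⟩).symm

lemma comp {f : A ⟶ B} {f' : B ⟶ B'} {g : X ⟶ Y} (hf : Orth f g) (hf' : Orth f' g) :
    Orth (f ≫ f') g := by
  intro u v huv
  obtain ⟨d, ⟨hdu, hdv⟩, -⟩ := hf u (f' ≫ v) (by rw [huv, Category.assoc])
  obtain ⟨d', ⟨hd'u, hd'v⟩, hd'⟩ := hf' d v hdv
  refine ⟨d', ⟨by rw [Category.assoc, hd'u, hdu], hd'v⟩,
    fun d'' ⟨hd''u, hd''v⟩ => hd' d'' ⟨?_, hd''v⟩⟩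
  exact hf.ext (by rw [hdu, ← hd''u, Category.assoc]) (by rw [Category.assoc, hd''v, hdv])

lemma comp_isIso {f : A ⟶ B} (i : B ⟶ B') [IsIso i] {g : X ⟶ Y} (h : Orth f g) :
    Orth (f ≫ i) g := by
  intro u v huv
  obtain ⟨d, ⟨hdu, hdv⟩, hd⟩ := h u (i ≫ v) (by rw [huv, Category.assoc])
  refine ⟨inv i ≫ d, ⟨by simp [hdu], by simp [hdv]⟩, fun d' ⟨hd'u, hd'v⟩ => ?_⟩
  rw [← hd (i ≫ d') ⟨by rw [← hd'u, Category.assoc], by rw [Category.assoc, hd'v]⟩,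
    IsIso.inv_hom_id_assoc]

lemma isIso_comp {f : A ⟶ B} (i : X' ⟶ X) [IsIso i] {g : X ⟶ Y} (h : Orth f g) :
    Orth f (i ≫ g) := by
  intro u v huv
  obtain ⟨d, ⟨hdu, hdv⟩, hd⟩ := h (u ≫ i) v (by rw [Category.assoc, huv])
  refine ⟨d ≫ inv i, ⟨by simp [← Category.assoc, hdu], by simp [hdv]⟩, fun d' ⟨hd'u, hd'v⟩ => ?_⟩
  rw [← hd (d' ≫ i) ⟨by rw [← hd'u, Category.assoc], by rw [Category.assoc, hd'v]⟩]
  simp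

lemma isIso_right {e : A ⟶ B} {m : B ⟶ Y} (h : Orth e m) (h' : Orth (e ≫ m) m) :
    IsIso m := by
  obtain ⟨k, ⟨hek, hkm⟩, -⟩ := h' e (𝟙 Y) (Category.comp_id _).symm
  refine ⟨k, h.ext (d₁ := m ≫ k) (d₂ := 𝟙 B) ?_ ?_, hkm⟩
  · rw [← Category.assoc, hek, Category.comp_id]
  · rw [Category.assoc, hkm, Category.comp_id, Category.id_comp]

lemma isIso_left {e : A ⟶ B} {m : B ⟶ Y} (h : Orth e m) (h' : Orth e (e ≫ m)) :
    IsIso e := by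
  obtain ⟨k, ⟨hek, hkm⟩, -⟩ := h' (𝟙 A) m (Category.id_comp _)
  refine ⟨k, hek, h.ext (d₁ := k ≫ e) (d₂ := 𝟙 B) ?_ ?_⟩
  · rw [← Category.assoc, hek, Category.id_comp, Category.comp_id]
  · rw [Category.assoc, hkm, Category.id_comp]

end Orth

namespace IsFS

variable {L R : MorphismProperty C} (hLR : IsFS L R)
include hLR

lemma orth {A B X Y : C} {f : A ⟶ B} {g : X ⟶ Y} (hf : L f) (hg : R g) : Orth f g :=
  (hLR.left_iff f).mp hf g hg

lemma left_comp {A B B' : C} {f : A ⟶ B} {g : B ⟶ B'} (hf : L f) (hg : L g) : L (f ≫ g) :=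
  (hLR.left_iff _).mpr fun _ _ _ hr => (hLR.orth hf hr).comp (hLR.orth hg hr)

lemma left_of_left_comp {A B B' : C} {f : A ⟶ B} {g : B ⟶ B'} (hf : L f) (hfg : L (f ≫ g)) :
    L g := by
  refine (hLR.left_iff g).mpr fun X Y r hr u v huv => ?_
  obtain ⟨d, ⟨hdu, hdv⟩, hd⟩ := hLR.orth hfg hr (f ≫ u) v
    (by rw [Category.assoc, huv, Category.assoc])
  have hgd : g ≫ d = u := (hLR.orth hf hr).ext (by rw [← Category.assoc, hdu])
    (by rw [Category.assoc, hdv, huv])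
  exact ⟨d, ⟨hgd, hdv⟩, fun d' ⟨hd'u, hd'v⟩ => hd d' ⟨by rw [Category.assoc, hd'u], hd'v⟩⟩

lemma left_comp_isIso {A B B' : C} {f : A ⟶ B} (i : B ⟶ B') [IsIso i] (hf : L f) :
    L (f ≫ i) :=
  (hLR.left_iff _).mpr fun _ _ _ hr => (hLR.orth hf hr).comp_isIso i

lemma right_isIso_comp {X X' Y : C} (i : X' ⟶ X) [IsIso i] {g : X ⟶ Y} (hg : R g) :
    R (i ≫ g) :=
  (hLR.right_iff _).mpr fun _ _ _ hf => (hLR.orth hf hg).isIso_comp i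

end IsFS

lemma IsFS.of_orth {L R : MorphismProperty C}
    (fac : ∀ ⦃X Y : C⦄ (f : X ⟶ Y), ∃ (Z : C) (e : X ⟶ Z) (m : Z ⟶ Y), L e ∧ R m ∧ e ≫ m = f)
    (orth : ∀ ⦃A B X Y : C⦄ (f : A ⟶ B) (g : X ⟶ Y), L f → R g → Orth f g)
    (left_comp_isIso : ∀ ⦃A B B' : C⦄ (f : A ⟶ B) (i : B ⟶ B'), IsIso i → L f → L (f ≫ i))
    (right_isIso_comp : ∀ ⦃X X' Y : C⦄ (i : X' ⟶ X) (g : X ⟶ Y), IsIso i → R g → R (i ≫ g)) :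
    IsFS L R where
  fac := fac
  left_iff := fun _ _ f => by
    refine ⟨fun hf _ _ g hg => orth f g hf hg, fun hf => ?_⟩
    obtain ⟨Z, e, m, he, hm, rfl⟩ := fac f
    exact left_comp_isIso e m ((orth e m he hm).isIso_right (hf m hm)) he
  right_iff := fun _ _ g => by
    refine ⟨fun hg _ _ f hf => orth f g hf hg, fun hg => ?_⟩
    obtain ⟨Z, e, m, he, hm, rfl⟩ := fac g
    exact right_isIso_comp e m ((orth e m he hm).isIso_left (hg e he)) hm

section Algebra

variable (T : Monad C)

lemma orth_algebraHom {A B X Y : T.Algebra} {f : A ⟶ B} {g : X ⟶ Y}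
    (h : Orth f.f g.f) (hT : Orth (T.map f.f) g.f) : Orth f g := by
  intro u v huv
  obtain ⟨d, ⟨hdu, hdv⟩, hd⟩ := h u.f v.f (congrArg Monad.Algebra.Hom.f huv)
  have hd_alg : T.map d ≫ X.a = B.a ≫ d := hT.ext
    (by rw [← Functor.map_comp_assoc, hdu, u.h, f.h_assoc, hdu])
    (by rw [Category.assoc, ← g.h, ← Functor.map_comp_assoc, hdv, Category.assoc, hdv, v.h])
  refine ⟨⟨d, hd_alg⟩, ⟨Monad.Algebra.Hom.ext hdu, Monad.Algebra.Hom.ext hdv⟩, ?_⟩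
  rintro d' ⟨rfl, rfl⟩
  exact Monad.Algebra.Hom.ext (hd d'.f ⟨rfl, rfl⟩)

variable {T}

section Factorization

variable {A B : T.Algebra} {Z : C} {e : A.A ⟶ Z} {m : Z ⟶ B.A} (a : T.obj Z ⟶ Z)
  (hea : T.map e ≫ a = A.a ≫ e) (ham : a ≫ m = T.map m ≫ B.a)
include hea ham

lemma unit_of_orth (h : Orth e m) : T.η.app Z ≫ a = 𝟙 Z :=
  h.ext (by rw [T.unit_naturality_assoc, hea, A.unit_assoc, Category.comp_id])
    (by rw [Category.assoc, ham, ← T.unit_naturality_assoc, B.unit, Category.comp_id,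
      Category.id_comp])

lemma assoc_of_orth (h : Orth (T.map (T.map e)) m) :
    T.μ.app Z ≫ a = T.map a ≫ a := by
  refine h.ext ?_ ?_
  · rw [T.mu_naturality_assoc, hea, ← Functor.map_comp_assoc, hea, Functor.map_comp_assoc, hea,
      A.assoc_assoc]
  · rw [Category.assoc, ham, ← T.mu_naturality_assoc, Category.assoc, ham,
      ← Functor.map_comp_assoc, ham, Functor.map_comp_assoc, B.assoc]

end Factorization

lemma exists_algebra_factorization {L R : MorphismProperty C} (hLR : IsFS L R)
    (hT : ∀ ⦃A B : C⦄ (f : A ⟶ B), L f → L (T.map f)) {A B : T.Algebra} (f : A ⟶ B) :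
    ∃ (Z : T.Algebra) (e : A ⟶ Z) (m : Z ⟶ B), L e.f ∧ R m.f ∧ e ≫ m = f := by
  obtain ⟨Z, e, m, he, hm, hem⟩ := hLR.fac f.f
  obtain ⟨a, ⟨hea, ham⟩, -⟩ := hLR.orth (hT e he) hm (A.a ≫ e) (T.map m ≫ B.a)
    (by rw [Category.assoc, hem, ← f.h, ← Functor.map_comp_assoc, hem])
  let Z' : T.Algebra := ⟨Z, a, unit_of_orth a hea ham (hLR.orth he hm),
    assoc_of_orth a hea ham (hLR.orth (hT _ (hT e he)) hm)⟩
  exact ⟨Z', ⟨e, hea⟩, ⟨m, ham.symm⟩, he, hm, Monad.Algebra.Hom.ext hem⟩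

lemma IsFS.algebra {L R : MorphismProperty C} (hLR : IsFS L R)
    (hT : ∀ ⦃A B : C⦄ (f : A ⟶ B), L f → L (T.map f)) :
    IsFS (algPre T L) (algPre T R) := by
  refine .of_orth (fun _ _ => exists_algebra_factorization hLR hT)
    (fun _ _ _ _ f g hf hg => orth_algebraHom T (hLR.orth hf hg) (hLR.orth (hT _ hf) hg))
    (fun _ _ _ f i _ hf => ?_) (fun _ _ _ i g _ hg => ?_)
  · have : IsIso i.f := inferInstanceAs (IsIso (T.forget.map i))
    exact hLR.left_comp_isIso i.f hf
  · have : IsIso i.f := inferInstanceAs (IsIso (T.forget.map i))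
    exact hLR.right_isIso_comp i.f hg

variable {P : MorphismProperty C} (hP : ∀ ⦃A B : C⦄ (f : A ⟶ B), P f → P (T.map f))
include hP

lemma isLocal_of_isLocal_algPre {X : T.Algebra} (hX : IsLocal (algPre T P) X) :
    IsLocal P X.A := by
  intro A B m hm
  have hconj : (fun u : B ⟶ X.A => m ≫ u) = T.adj.homEquiv A X ∘
      (fun g : T.free.obj B ⟶ X => T.free.map m ≫ g) ∘ (T.adj.homEquiv B X).symm := by
    funext u
    change m ≫ u = T.adj.homEquiv A X (T.free.map m ≫ (T.adj.homEquiv B X).symm u)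
    rw [Adjunction.homEquiv_naturality_left]
    exact congrArg (m ≫ ·) ((T.adj.homEquiv B X).apply_symm_apply u).symm
  rw [hconj]
  exact (T.adj.homEquiv A X).bijective.comp
    ((hX (T.free.map m) (hP m hm)).comp (T.adj.homEquiv B X).symm.bijective)

lemma isLocal_algPre_of_isLocal {X : T.Algebra} (hX : IsLocal P X.A) :
    IsLocal (algPre T P) X := by
  intro A B m hm
  refine ⟨fun g₁ g₂ hg => Monad.Algebra.Hom.ext ((hX m.f hm).injective
    (congrArg Monad.Algebra.Hom.f hg)), fun u => ?_⟩
  obtain ⟨g, hg⟩ := (hX m.f hm).surjective u.f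
  have hg : m.f ≫ g = u.f := hg
  have hg_alg : T.map g ≫ X.a = B.a ≫ g := (hX _ (hP m.f hm)).injective <| by
    show T.map m.f ≫ T.map g ≫ X.a = T.map m.f ≫ B.a ≫ g
    rw [← Functor.map_comp_assoc, hg, u.h, m.h_assoc, hg]
  exact ⟨⟨g, hg_alg⟩, Monad.Algebra.Hom.ext hg⟩

lemma isLocal_algPre_iff (X : T.Algebra) : IsLocal (algPre T P) X ↔ IsLocal P X.A :=
  ⟨isLocal_of_isLocal_algPre hP, isLocal_algPre_of_isLocal hP⟩

end Algebra

namespace IsOrthModel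

variable {Cof W Fib : MorphismProperty C} (h : IsOrthModel Cof W Fib)
include h

lemma exists_fac_of_cof {A B : C} {f : A ⟶ B} (hf : Cof f) :
    ∃ (Z : C) (e : A ⟶ Z) (m : Z ⟶ B), (Cof e ∧ W e) ∧ (Fib m ∧ Cof m) ∧ e ≫ m = f := by
  obtain ⟨Z, e, m, he, hm, rfl⟩ := h.fs₁.fac f
  exact ⟨Z, e, m, he, ⟨hm, h.fs₂.left_of_left_comp he.1 hf⟩, rfl⟩

lemma map_cof {D : Type u₂} [Category.{v₂} D] (F : C ⥤ D)
    {Cof' W' Fib' : MorphismProperty D} (h' : IsOrthModel Cof' W' Fib')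
    (hE : ∀ ⦃A B : C⦄ (f : A ⟶ B), Cof f ∧ W f → Cof' (F.map f) ∧ W' (F.map f))
    (hJ : ∀ ⦃A B : C⦄ (f : A ⟶ B), Fib f ∧ Cof f → Fib' (F.map f) ∧ Cof' (F.map f))
    {A B : C} {f : A ⟶ B} (hf : Cof f) : Cof' (F.map f) := by
  obtain ⟨Z, e, m, he, hm, rfl⟩ := h.exists_fac_of_cof hf
  rw [F.map_comp]
  exact h'.fs₂.left_comp (hE e he).1 (hJ m hm).2

lemma algebra (T : Monad C) (hT : ∀ ⦃A B : C⦄ (f : A ⟶ B), Cof f → Cof (T.map f))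
    (hE : ∀ ⦃A B : C⦄ (f : A ⟶ B), Cof f ∧ W f → Cof (T.map f) ∧ W (T.map f)) :
    IsOrthModel (algPre T Cof) (algPre T W) (algPre T Fib) := by
  obtain ⟨hcomp, hcancel_left, hcancel_right⟩ := h.two_of_three
  exact ⟨⟨fun _ _ _ f g => hcomp f.f g.f, fun _ _ _ f g => hcancel_left f.f g.f,
      fun _ _ _ f g => hcancel_right f.f g.f⟩,
    h.fs₁.algebra hE, h.fs₂.algebra hT⟩

end IsOrthModel

end DFS

theorem statement6_general {C : Type u} [Category.{v} C]
    (Cof W Fib : MorphismProperty C) (h : DFS.IsOrthModel Cof W Fib) (T : Monad C)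
    (hE : ∀ ⦃A B : C⦄ (f : A ⟶ B), Cof f ∧ W f →
      Cof (T.toFunctor.map f) ∧ W (T.toFunctor.map f))
    (hJ : ∀ ⦃A B : C⦄ (f : A ⟶ B), Fib f ∧ Cof f →
      Fib (T.toFunctor.map f) ∧ Cof (T.toFunctor.map f)) :
    DFS.IsOrthModel (DFS.algPre T Cof) (DFS.algPre T W) (DFS.algPre T Fib) ∧
    (∀ X : T.Algebra,
      DFS.IsLocal (DFS.algPre T Cof) X ↔ DFS.IsLocal Cof X.A) ∧
    (∀ ⦃A B : C⦄ (f : A ⟶ B), Cof f → DFS.algPre T Cof (T.free.map f)) ∧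
    (∀ ⦃A B : C⦄ (f : A ⟶ B), Cof f ∧ W f →
      DFS.algPre T Cof (T.free.map f) ∧ DFS.algPre T W (T.free.map f)) := by
  have hCof : ∀ ⦃A B : C⦄ (f : A ⟶ B), Cof f → Cof (T.map f) :=
    fun _ _ _ hf => h.map_cof T.toFunctor h hE hJ hf
  exact ⟨h.algebra T hCof hE, DFS.isLocal_algPre_iff hCof, hCof, hE⟩

/-- Let `(C, Cof, W, Fib)` be a bicomplete orthogonal model category and
`T` a monad preserving all small colimits, trivial cofibrations and bifibrant morphisms.
Then (i) the preimages of `Cof`, `W`, `Fib` under the forgetful functor form an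
orthogonal model structure on `C^T`; (ii) a `T`-algebra is `Cof^T`-local iff its
underlying object is `Cof`-local; in particular `F^T ⊣ V^T` is a Quillen adjunction
(the free functor preserves cofibrations and trivial cofibrations). -/
theorem statement6 {C : Type u} [Category.{v} C] [HasLimits C] [HasColimits C]
    (Cof W Fib : MorphismProperty C) (h : DFS.IsOrthModel Cof W Fib) (T : Monad C)
    [PreservesColimits T.toFunctor]
    (hE : ∀ ⦃A B : C⦄ (f : A ⟶ B), Cof f ∧ W f →
      Cof (T.toFunctor.map f) ∧ W (T.toFunctor.map f))
    (hJ : ∀ ⦃A B : C⦄ (f : A ⟶ B), Fib f ∧ Cof f →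
      Fib (T.toFunctor.map f) ∧ Cof (T.toFunctor.map f)) :
    DFS.IsOrthModel (DFS.algPre T Cof) (DFS.algPre T W) (DFS.algPre T Fib) ∧
    (∀ X : T.Algebra,
      DFS.IsLocal (DFS.algPre T Cof) X ↔ DFS.IsLocal Cof X.A) ∧
    (∀ ⦃A B : C⦄ (f : A ⟶ B), Cof f → DFS.algPre T Cof (T.free.map f)) ∧
    (∀ ⦃A B : C⦄ (f : A ⟶ B), Cof f ∧ W f →
      DFS.algPre T Cof (T.free.map f) ∧ DFS.algPre T W (T.free.map f)) :=
  statement6_general Cof W Fib h T hE hJ
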